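/- Let r > 0, v > 0, Γ > 0, Δ > 0, η ∈ (0,1), and 0 ≤ ℓ < h be real numbers. For k ∈ {ℓ, h} define π_k(q) = q·((1−η)·𝓛(k) − η·𝓐(k)) − η·Γ·(1 − √(1+k)·(1+r)/Δ), where 𝓛(f) = v·f·(1+r)·(2Δ − (r+2)·√(1+f))/Δ and 𝓐(f) = v·((Δ − √(1+f)·(1+r))·(Δ² + Δ·√(1+f)·(1+r) + (1+f)·(r−2)·(r+1)) + (1+f)^{3/2}·r²·(r+1))/(3Δ). Suppose B := (1−η)·(𝓛(ℓ) − 𝓛(h)) + η·(𝓐(h) − 𝓐(ℓ)) > 0, and set q⋆ = Γ·η·(1+r)·(√(1+h) − √(1+ℓ))/(Δ·B). Then q⋆ > 0, π_ℓ(q⋆) = π_h(q⋆), and for every q ≥ 0 one has π_ℓ(q) > π_h(q) if and only if q > q⋆; that is, liquidity providers with endowment above q⋆ strictly prefer the low-fee pool and those below strictly prefer the high-fee pool. -/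
import Mathlib


/-- The liquidity yield `𝓛`. -/
noncomputable def liqYield (v r Δ f : ℝ) : ℝ :=
  v * f * (1 + r) * (2 * Δ - (r + 2) * Real.sqrt (1 + f)) / Δ

/-- The adverse selection cost `𝓐`. -/
noncomputable def advSel (v r Δ f : ℝ) : ℝ :=
  v * ((Δ - Real.sqrt (1 + f) * (1 + r)) *
        (Δ ^ 2 + Δ * Real.sqrt (1 + f) * (1 + r) + (1 + f) * (r - 2) * (r + 1)) +
      (1 + f) ^ ((3 : ℝ) / 2) * r ^ 2 * (r + 1)) / (3 * Δ)

/-- Expected profit of a liquidity provider with endowment `q` on the pool with fee `k`. -/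
noncomputable def lpProfit (v r Δ Γ η k q : ℝ) : ℝ :=
  q * ((1 - η) * liqYield v r Δ k - η * advSel v r Δ k) -
    η * Γ * (1 - Real.sqrt (1 + k) * (1 + r) / Δ)

/-- Proposition 1(ii): the marginal liquidity provider. If
`B = (1−η)·(𝓛(ℓ) − 𝓛(h)) + η·(𝓐(h) − 𝓐(ℓ)) > 0` and
`q⋆ = Γ·η·(1+r)·(√(1+h) − √(1+ℓ))/(Δ·B)`, then `q⋆ > 0`, `π_ℓ(q⋆) = π_h(q⋆)`, and
`π_ℓ(q) > π_h(q) ↔ q > q⋆` for all `q ≥ 0`. -/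
theorem marginal_liquidity_provider
    (r v Γ Δ η ℓ h : ℝ) (hr : 0 < r) (hv : 0 < v) (hΓ : 0 < Γ) (hΔ : 0 < Δ)
    (hη : η ∈ Set.Ioo (0 : ℝ) 1) (hℓ : 0 ≤ ℓ) (hℓh : ℓ < h)
    (hB : 0 < (1 - η) * (liqYield v r Δ ℓ - liqYield v r Δ h) +
        η * (advSel v r Δ h - advSel v r Δ ℓ)) :
    0 < Γ * η * (1 + r) * (Real.sqrt (1 + h) - Real.sqrt (1 + ℓ)) /
        (Δ * ((1 - η) * (liqYield v r Δ ℓ - liqYield v r Δ h) +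
          η * (advSel v r Δ h - advSel v r Δ ℓ))) ∧
    lpProfit v r Δ Γ η ℓ
        (Γ * η * (1 + r) * (Real.sqrt (1 + h) - Real.sqrt (1 + ℓ)) /
          (Δ * ((1 - η) * (liqYield v r Δ ℓ - liqYield v r Δ h) +
            η * (advSel v r Δ h - advSel v r Δ ℓ)))) =
      lpProfit v r Δ Γ η h
        (Γ * η * (1 + r) * (Real.sqrt (1 + h) - Real.sqrt (1 + ℓ)) /
          (Δ * ((1 - η) * (liqYield v r Δ ℓ - liqYield v r Δ h) +
            η * (advSel v r Δ h - advSel v r Δ ℓ)))) ∧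
    ∀ q : ℝ, 0 ≤ q →
      (lpProfit v r Δ Γ η h q < lpProfit v r Δ Γ η ℓ q ↔
        Γ * η * (1 + r) * (Real.sqrt (1 + h) - Real.sqrt (1 + ℓ)) /
          (Δ * ((1 - η) * (liqYield v r Δ ℓ - liqYield v r Δ h) +
            η * (advSel v r Δ h - advSel v r Δ ℓ))) < q) := by
  obtain ⟨hη0, hη1⟩ := hη
  set B : ℝ := (1 - η) * (liqYield v r Δ ℓ - liqYield v r Δ h) +
      η * (advSel v r Δ h - advSel v r Δ ℓ) with hBdef
  set s : ℝ := Real.sqrt (1 + h) - Real.sqrt (1 + ℓ) with hsdef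
  have hs : 0 < s := by
    have := Real.sqrt_lt_sqrt (by linarith : (0:ℝ) ≤ 1 + ℓ) (by linarith : 1 + ℓ < 1 + h)
    simpa [hsdef, sub_pos] using this
  have hnum : 0 < Γ * η * (1 + r) * s := by positivity
  have hden : 0 < Δ * B := by positivity
  have hq : 0 < Γ * η * (1 + r) * s / (Δ * B) := div_pos hnum hden
  set qs : ℝ := Γ * η * (1 + r) * s / (Δ * B) with hqs
  have hdiff : ∀ q : ℝ, lpProfit v r Δ Γ η ℓ q - lpProfit v r Δ Γ η h q
      = q * B - Γ * η * (1 + r) * s / Δ := by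
    intro q
    simp only [lpProfit, hBdef, hsdef]
    field_simp
    ring
  have hqsB : qs * B = Γ * η * (1 + r) * s / Δ := by
    rw [hqs]
    field_simp
  refine ⟨hq, ?_, ?_⟩
  · have := hdiff qs
    rw [hqsB] at this
    linarith
  · intro q _
    have h1 := hdiff q
    constructor
    · intro hlt
      have hqB : qs * B < q * B := by
        rw [hqsB]; linarith
      exact lt_of_mul_lt_mul_right hqB hB.le
    · intro hlt
      have hqB : qs * B < q * B := by
        exact mul_lt_mul_of_pos_right hlt hB
      rw [hqsB] at hqB
      linarith
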